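/- arXiv:1707.01187 — 2 statements merged into one kernel-verified Lean document; each statement's English description precedes it below -/
import Mathlib

section
/- In any configuration on a cycle of n philosophers where each philosopher has a group bit g ∈ {0,1}, each philosopher holds at most the chopsticks adjacent to him, every philosopher in group 0 who holds exactly one chopstick holds his left one, every philosopher in group 1 who holds exactly one chopstick holds his right one, and no philosopher holds two chopsticks: if some philosopher holds a chopstick and every held chopstick's other claimant is blocked (i.e., for every philosopher holding his left chopstick, his right chopstick is held by his right neighbor), then all philosophers are in group 0. Contrapositively, if the group bits are not all equal, a deadlock of this form is impossible. -/
/-- Deadlock analysis on a cycle of `n` philosophers (`ZMod n`), chopstick `c`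
sitting between philosopher `c` and `c+1`.  `g` are the group bits
(`false` = group 0, `true` = group 1), `hold c = some i` means philosopher `i`
holds chopstick `c`.  If each philosopher holds at most one chopstick, group-0
philosophers hold only their left chopstick, group-1 philosophers only their
right one, and every holder is blocked, then from the existence of one held
chopstick it follows that all group bits are equal. -/
theorem deadlock_forces_symmetry (n : ℕ) (hn : 2 ≤ n)
    (g : ZMod n → Bool) (hold : ZMod n → Option (ZMod n))
    (hone : ∀ i : ZMod n, ∀ c c' : ZMod n,
      hold c = some i → hold c' = some i → c = c')
    (hleft : ∀ i c : ZMod n, g i = false → hold c = some i → c = i - 1)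
    (hright : ∀ i c : ZMod n, g i = true → hold c = some i → c = i)
    (hblock0 : ∀ i : ZMod n, g i = false → hold (i - 1) = some i →
      hold i = some (i + 1))
    (hblock1 : ∀ i : ZMod n, g i = true → hold i = some i →
      hold (i - 1) = some (i - 1)) :
    (∃ c i : ZMod n, hold c = some i) → ∀ i j : ZMod n, g i = g j := by
  rintro ⟨c, i, hc⟩
  haveI : NeZero n := ⟨by omega⟩
  haveI : Fact (1 < n) := ⟨by omega⟩
  have h10 : (1 : ZMod n) ≠ 0 := one_ne_zero
  rcases (Bool.eq_false_or_eq_true (g i)).symm with hgi | hgi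
  · -- group 0: propagate forward, all bits false
    have key : ∀ k : ℕ, g (i + k) = false ∧ hold (i + k) = some (i + k + 1) := by
      intro k
      induction k with
      | zero =>
        have hc' : c = i - 1 := hleft i c hgi hc
        subst hc'
        simpa using ⟨hgi, hblock0 i hgi hc⟩
      | succ k ih =>
        obtain ⟨hg, hh⟩ := ih
        have hgf : g (i + k + 1) = false := by
          by_contra h
          rw [Bool.not_eq_false] at h
          have h' : g (i + k + 1) = true := h
          have := hright _ _ h' hh
          exact h10 (by simpa using congrArg (fun x => x - (i + (k:ZMod n))) this.symm)
        have hh' : hold ((i + k + 1) - 1) = some (i + k + 1) := by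
          simpa using hh
        have := hblock0 _ hgf hh'
        constructor
        · simpa [add_assoc] using hgf
        · push_cast
          simpa [add_assoc] using this
    intro a b
    have ha : g a = false := by
      obtain ⟨k, hk⟩ := ZMod.natCast_rightInverse.surjective (a - i)
      have : i + (k : ℕ) = a := by rw [show ((k:ℕ):ZMod n) = a - i from by simpa using hk]; ring
      rw [← this]; exact (key k).1
    have hb : g b = false := by
      obtain ⟨k, hk⟩ := ZMod.natCast_rightInverse.surjective (b - i)
      have : i + (k : ℕ) = b := by rw [show ((k:ℕ):ZMod n) = b - i from by simpa using hk]; ring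
      rw [← this]; exact (key k).1
    rw [ha, hb]
  · -- group 1: propagate backward, all bits true
    have key : ∀ k : ℕ, g (i - k) = true ∧ hold (i - k) = some (i - k) := by
      intro k
      induction k with
      | zero =>
        have hc' : c = i := hright i c hgi hc
        subst hc'
        simpa using ⟨hgi, hc⟩
      | succ k ih =>
        obtain ⟨hg, hh⟩ := ih
        have hb1 := hblock1 _ hg hh
        have hgt : g (i - k - 1) = true := by
          by_contra h
          rw [Bool.not_eq_true] at h
          have h' : g (i - (k:ZMod n) - 1) = false := h
          have := hleft _ _ h' hb1
          exact h10 (by simpa using congrArg (fun x => (i - (k:ZMod n) - 1) - x) this)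
        constructor
        · push_cast; simpa [sub_sub] using hgt
        · push_cast; simpa [sub_sub] using hb1
    intro a b
    have ha : g a = true := by
      obtain ⟨k, hk⟩ := ZMod.natCast_rightInverse.surjective (i - a)
      have : i - (k : ℕ) = a := by rw [show ((k:ℕ):ZMod n) = i - a from by simpa using hk]; ring
      rw [← this]; exact (key k).1
    have hb : g b = true := by
      obtain ⟨k, hk⟩ := ZMod.natCast_rightInverse.surjective (i - b)
      have : i - (k : ℕ) = b := by rw [show ((k:ℕ):ZMod n) = i - b from by simpa using hk]; ring
      rw [← this]; exact (key k).1
    rw [ha, hb]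
end

section
/- Doubling argument for leader election impossibility: if a deterministic anonymous synchronous algorithm on a ring of size n has an execution (from the symmetric initial configuration) that terminates with exactly one elected leader, then running the same algorithm on a ring of size 2n produces an execution in which the states of processor i and processor i+n remain equal at every round, so if any processor elects itself leader, at least two processors do. -/
/-- Doubling argument: a deterministic anonymous synchronous ring algorithm
(state set `Σ`, message set `M`, common transition `δ` and common initial
configuration `init`), run on a ring `ZMod (2n)`, keeps the configurations of
processors `i` and `i + n` equal at every round; hence the set of processors in
any designated leader-state set `L` is closed under `i ↦ i + n`, so it can never
consist of exactly one processor. -/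
theorem doubling_no_unique_leader (n : ℕ) (hn : 1 ≤ n)
    {σ : Type*} {M : Type*} (init : σ × M × M)
    (δ : σ × M × M → σ × M × M)
    (conf : ℕ → ZMod (2 * n) → σ × M × M)
    (hinit : ∀ i, conf 0 i = init)
    (hstep : ∀ t i, conf (t + 1) i =
      δ ((conf t i).1, (conf t (i - 1)).2.2, (conf t (i + 1)).2.1)) :
    (∀ t i, conf t i = conf t (i + n)) ∧
    ∀ (t : ℕ) (L : Set σ), {i : ZMod (2 * n) | (conf t i).1 ∈ L}.ncard ≠ 1 := by
  have hsym : ∀ t i, conf t i = conf t (i + n) := by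
    intro t
    induction t with
    | zero => intro i; rw [hinit, hinit]
    | succ t ih =>
      intro i
      rw [hstep, hstep, ih i, ih (i - 1), ih (i + 1)]
      ring_nf
  have hne : (n : ZMod (2 * n)) ≠ 0 := by
    have h2 : 0 < 2 * n := by omega
    haveI : NeZero (2 * n) := ⟨by omega⟩
    intro h
    have hd := (ZMod.natCast_eq_zero_iff n (2 * n)).mp h
    have := Nat.le_of_dvd (by omega) hd
    omega
  refine ⟨hsym, ?_⟩
  intro t L h1
  set S := {i : ZMod (2 * n) | (conf t i).1 ∈ L} with hS
  haveI : NeZero (2 * n) := ⟨by omega⟩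
  obtain ⟨a, ha⟩ := Set.ncard_eq_one.mp h1
  have haS : a ∈ S := ha ▸ rfl
  have haS' : a + n ∈ S := by
    simp only [hS, Set.mem_setOf_eq] at haS ⊢
    rw [← hsym t a]; exact haS
  rw [ha] at haS haS'
  have : a + n = a := haS'
  exact hne (by rwa [add_eq_left] at this)
end
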